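/- arXiv:2504.16172 — 2 statements merged into one kernel-verified Lean document; each statement's English description precedes it below -/
import Mathlib

section
/- Let β > 0, C ≥ 1 and p > 0 be real numbers, let e_0 denote Euler's number, and for each integer N ≥ 2 set M_N := ⌊N^{2β}⌋ and E(N) := (e_0·(pN/2+1))^{1/8} · (2C)^{N−1} · exp(β·M_N^{1/(2β)}) / √(M_N^{N−1}). Then for every η > 0 there exists N₀ such that for all N ≥ N₀ one has E(N) ≤ exp( N·log N·(−β + η) ); equivalently, limsup_{N→∞} (log E(N))/(N·log N) ≤ −β. -/
set_option maxHeartbeats 1000000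

open Filter Real


/-- Sample base `M_N = ⌊N^{2β}⌋` of the full-history Multilevel Picard iteration. -/
noncomputable def fullhistSampleBase (β : ℝ) (N : ℕ) : ℕ :=
  Nat.floor ((N : ℝ) ^ (2 * β))

/-- Convergence factor
`E(M_N, N) = (e₀·(pN/2+1))^{1/8} · (2C)^{N−1} · exp(β·M_N^{1/(2β)}) / √(M_N^{N−1})`
of the full-history Multilevel Picard iteration with `N` levels and sample base
`M_N = ⌊N^{2β}⌋`. -/
noncomputable def fullhistFactor (β C p : ℝ) (N : ℕ) : ℝ :=
  (Real.exp 1 * (p * (N:ℝ) / 2 + 1)) ^ ((1:ℝ)/8) * (2*C) ^ (N-1)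
    * Real.exp (β * ((fullhistSampleBase β N : ℕ) : ℝ) ^ (1/(2*β)))
    / Real.sqrt (((fullhistSampleBase β N : ℕ) : ℝ) ^ (N-1))

/-- Error order of the full-history Multilevel Picard factor with
sample base `M_N = ⌊N^{2β}⌋`: for every `η > 0`, eventually
`E(N) ≤ exp(N·log N·(−β+η))`. -/
theorem fullhist_factor_error_order
    (β C p : ℝ) (hβ : 0 < β) (hC : 1 ≤ C) (hp : 0 < p) :
    ∀ η > (0:ℝ), ∃ N₀ : ℕ, ∀ N : ℕ, N₀ ≤ N → 2 ≤ N →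
      fullhistFactor β C p N
        ≤ Real.exp ((N:ℝ) * Real.log (N:ℝ) * (-β + η)) := by
  intro η hη
  have hη3 : 0 < η/3 := by linarith
  have hlogt : Tendsto (fun N : ℕ => Real.log N) atTop atTop :=
    Real.tendsto_log_atTop.comp tendsto_natCast_atTop_atTop
  have hNt : Tendsto (fun N : ℕ => (N:ℝ)) atTop atTop := tendsto_natCast_atTop_atTop
  have hNlogt : Tendsto (fun N : ℕ => (N:ℝ) * Real.log N) atTop atTop :=
    hNt.atTop_mul_atTop₀ hlogt
  have hrt : Tendsto (fun N : ℕ => (N:ℝ) ^ (2*β)) atTop atTop :=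
    (tendsto_rpow_atTop (by positivity)).comp tendsto_natCast_atTop_atTop
  have h1 : ∀ᶠ N : ℕ in atTop, 1 + Real.log (p+1) ≤ η/3 * ((N:ℝ) * Real.log N) := by
    filter_upwards [hNlogt.eventually_ge_atTop ((1 + Real.log (p+1))/(η/3))] with N hN
    rw [div_le_iff₀ hη3] at hN; linarith
  have h2 : ∀ᶠ N : ℕ in atTop, 1 + β ≤ η/3 * (N:ℝ) := by
    filter_upwards [hNt.eventually_ge_atTop ((1 + β)/(η/3))] with N hN
    rw [div_le_iff₀ hη3] at hN; linarith
  have h3 : ∀ᶠ N : ℕ in atTop,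
      Real.log (2*C) + β + Real.log 2 / 2 ≤ η/3 * Real.log N := by
    filter_upwards [hlogt.eventually_ge_atTop ((Real.log (2*C) + β + Real.log 2 / 2)/(η/3))]
      with N hN
    rw [div_le_iff₀ hη3] at hN; linarith
  have h4 : ∀ᶠ N : ℕ in atTop, (2:ℝ) ≤ (N:ℝ)^(2*β) := hrt.eventually_ge_atTop 2
  have hmain : ∀ᶠ N : ℕ in atTop,
      fullhistFactor β C p N ≤ Real.exp ((N:ℝ) * Real.log (N:ℝ) * (-β + η)) := by
    filter_upwards [h1, h2, h3, h4, eventually_ge_atTop 2] with N hK1 hK2 hK3 hx2 hN2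
    set M := fullhistSampleBase β N with hMdef
    have hNR : (2:ℝ) ≤ (N:ℝ) := by exact_mod_cast hN2
    have hN1 : (1:ℝ) ≤ (N:ℝ) := by linarith
    have hN0 : (0:ℝ) < (N:ℝ) := by linarith
    have hL0 : 0 ≤ Real.log N := Real.log_nonneg hN1
    have hM2 : 2 ≤ M := by
      apply Nat.le_floor
      push_cast
      exact hx2
    have hm2 : (2:ℝ) ≤ (M:ℝ) := by exact_mod_cast hM2
    have hm0 : (0:ℝ) < (M:ℝ) := by linarith
    have hmle : (M:ℝ) ≤ (N:ℝ)^(2*β) := Nat.floor_le (by positivity)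
    have hmlow : (N:ℝ)^(2*β)/2 ≤ (M:ℝ) := by
      have h' := Nat.lt_floor_add_one ((N:ℝ)^(2*β))
      have hfl : ((⌊(N:ℝ)^(2*β)⌋₊ : ℕ) : ℝ) = (M:ℝ) := by
        rw [hMdef, fullhistSampleBase]
      rw [hfl] at h'
      linarith
    have h2C : (1:ℝ) < 2*C := by linarith
    have hlog2C : 0 ≤ Real.log (2*C) := Real.log_nonneg h2C.le
    have hlog2Cge : Real.log 2 ≤ Real.log (2*C) := by
      apply Real.log_le_log (by norm_num); linarith
    have hlogm : 2*β*Real.log N - Real.log 2 ≤ Real.log M := by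
      have hmono : Real.log ((N:ℝ)^(2*β)/2) ≤ Real.log M :=
        Real.log_le_log (by positivity) hmlow
      rw [Real.log_div (by positivity) two_ne_zero, Real.log_rpow hN0] at hmono
      linarith
    -- abbreviations for exponents
    set a' := 1 + Real.log (p+1) + Real.log N with ha'
    set b' := (N:ℝ) * Real.log (2*C) with hb'
    set d' := ((N:ℝ)-1)/2 * (2*β*Real.log N - Real.log 2) with hd'
    -- bound on first factor
    have hA : (Real.exp 1 * (p * (N:ℝ) / 2 + 1)) ^ ((1:ℝ)/8) ≤ Real.exp a' := by
      have he1 : (1:ℝ) ≤ Real.exp 1 := Real.one_le_exp zero_le_one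
      have hq : (1:ℝ) ≤ p * (N:ℝ) / 2 + 1 := by nlinarith
      have ht1 : (1:ℝ) ≤ Real.exp 1 * (p * (N:ℝ) / 2 + 1) := by
        nlinarith [mul_le_mul he1 hq zero_le_one (zero_le_one.trans he1)]
      have h18 : (Real.exp 1 * (p * (N:ℝ) / 2 + 1)) ^ ((1:ℝ)/8)
          ≤ (Real.exp 1 * (p * (N:ℝ) / 2 + 1)) ^ (1:ℝ) :=
        Real.rpow_le_rpow_of_exponent_le ht1 (by norm_num)
      rw [Real.rpow_one] at h18
      have hexp : Real.exp a' = Real.exp 1 * ((p+1) * (N:ℝ)) := by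
        rw [ha', Real.exp_add, Real.exp_add, Real.exp_log (by linarith : (0:ℝ) < p+1),
          Real.exp_log hN0, mul_assoc]
      rw [hexp]
      have hpn : p * (N:ℝ) / 2 + 1 ≤ (p+1) * (N:ℝ) := by nlinarith
      exact h18.trans (mul_le_mul_of_nonneg_left hpn (Real.exp_pos 1).le)
    -- bound on second factor
    have hB : (2*C) ^ (N-1) ≤ Real.exp b' := by
      have hcast : ((N-1:ℕ):ℝ) ≤ (N:ℝ) := by exact_mod_cast Nat.sub_le N 1
      have : (2*C) ^ (N-1) = Real.exp (((N-1:ℕ):ℝ) * Real.log (2*C)) := by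
        rw [Real.exp_nat_mul, Real.exp_log (by linarith : (0:ℝ) < 2*C)]
      rw [this, hb']
      apply Real.exp_le_exp.mpr
      exact mul_le_mul_of_nonneg_right hcast hlog2C
    -- bound on third factor
    have hc : β * (M:ℝ) ^ (1/(2*β)) ≤ β * (N:ℝ) := by
      have hr := Real.rpow_le_rpow hm0.le hmle (by positivity : (0:ℝ) ≤ 1/(2*β))
      have heq : ((N:ℝ)^(2*β)) ^ (1/(2*β)) = (N:ℝ) := by
        rw [← Real.rpow_mul hN0.le, mul_one_div, div_self (by positivity : (2*β) ≠ 0),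
          Real.rpow_one]
      rw [heq] at hr
      exact mul_le_mul_of_nonneg_left hr hβ.le
    -- bound on denominator
    have hD : Real.exp d' ≤ Real.sqrt ((M:ℝ) ^ (N-1)) := by
      rw [show ((M:ℝ) ^ (N-1)) = Real.exp (((N-1:ℕ):ℝ) * Real.log M) by
        rw [Real.exp_nat_mul, Real.exp_log hm0]]
      rw [Real.le_sqrt (Real.exp_pos _).le]
      rw [← Real.exp_nat_mul]
      apply Real.exp_le_exp.mpr
      have hcast : ((N-1:ℕ):ℝ) = (N:ℝ) - 1 := by
        have : (1:ℕ) ≤ N := by omega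
        push_cast [this]; ring
      rw [hcast, hd']
      have hge : 0 ≤ (N:ℝ) - 1 := by linarith
      nlinarith [mul_le_mul_of_nonneg_left hlogm hge]
      positivity
    -- combine
    have hEdef : fullhistFactor β C p N
        = (Real.exp 1 * (p * (N:ℝ) / 2 + 1)) ^ ((1:ℝ)/8) * (2*C) ^ (N-1)
          * Real.exp (β * (M:ℝ) ^ (1/(2*β))) / Real.sqrt ((M:ℝ) ^ (N-1)) := rfl
    have step1 : fullhistFactor β C p N
        ≤ (Real.exp a' * Real.exp b' * Real.exp (β * (N:ℝ))) / Real.exp d' := by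
      rw [hEdef]
      apply div_le_div₀ (by positivity)
      · apply mul_le_mul
        · exact mul_le_mul hA hB (by positivity) (Real.exp_pos _).le
        · exact Real.exp_le_exp.mpr hc
        · exact (Real.exp_pos _).le
        · positivity
      · exact Real.exp_pos _
      · exact hD
    have step2 : (Real.exp a' * Real.exp b' * Real.exp (β * (N:ℝ))) / Real.exp d'
        = Real.exp (a' + b' + β * (N:ℝ) - d') := by
      rw [← Real.exp_add, ← Real.exp_add, ← Real.exp_sub]
    rw [step2] at step1
    refine step1.trans (Real.exp_le_exp.mpr ?_)
    have hA' : (1+β) * Real.log N ≤ (η/3 * (N:ℝ)) * Real.log N :=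
      mul_le_mul_of_nonneg_right hK2 hL0
    have hB' : (Real.log (2*C) + β + Real.log 2 / 2) * (N:ℝ)
        ≤ (η/3 * Real.log N) * (N:ℝ) :=
      mul_le_mul_of_nonneg_right hK3 hN0.le
    have hlog2 : (0:ℝ) ≤ Real.log 2 := Real.log_nonneg one_le_two
    rw [ha', hb', hd']
    nlinarith [hK1, hA', hB', hlog2, hL0]
  rw [eventually_atTop] at hmain
  obtain ⟨N₀, hN₀⟩ := hmain
  exact ⟨N₀, fun N hN _ => hN₀ N hN⟩
end

section
/- Let β > 0, C ≥ 1, p > 0 and δ > 0 be real numbers, let e_0 denote Euler's number, and for each integer N ≥ 2 set M_N := ⌊N^{2β}⌋ and E(N) := (e_0·(pN/2+1))^{1/8} · (2C)^{N−1} · exp(β·M_N^{1/(2β)}) / √(M_N^{N−1}). Then for every η > 0 there exists N₀ such that for all N ≥ N₀ one has (5·M_N)^N · E(N)^{2+δ} ≤ exp( N·log N·(−β·δ + η) ); equivalently, limsup_{N→∞} log( (5M_N)^N · E(N)^{2+δ} ) / (N·log N) ≤ −βδ. In particular (5M_N)^N·E(N)^{2+δ} → 0. -/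
open Real Filter

private lemma aux_linear_le (a b c η : ℝ) (hη : 0 < η) :
    ∀ᶠ N : ℕ in Filter.atTop,
      a * (N:ℝ) + b * Real.log N + c ≤ η * ((N:ℝ) * Real.log N) := by
  have hN : Tendsto (fun N : ℕ => (N:ℝ)) atTop atTop := tendsto_natCast_atTop_atTop
  have hL : Tendsto (fun N : ℕ => Real.log N) atTop atTop :=
    Real.tendsto_log_atTop.comp hN
  filter_upwards [hL.eventually_ge_atTop 1, hL.eventually_ge_atTop (3*|a|/η),
    hN.eventually_ge_atTop (3*|b|/η), hN.eventually_ge_atTop (3*|c|/η)] with N h1 h2 h3 h4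
  have hN0 : (0:ℝ) ≤ (N:ℝ) := Nat.cast_nonneg N
  have ha : a * N ≤ η/3 * ((N:ℝ) * Real.log N) := by
    have h2' : a ≤ η/3 * Real.log N := by
      rw [div_le_iff₀ hη] at h2
      have := le_abs_self a; linarith
    calc a * N ≤ (η/3*Real.log N) * N := mul_le_mul_of_nonneg_right h2' hN0
      _ = η/3 * ((N:ℝ)*Real.log N) := by ring
  have hb : b * Real.log N ≤ η/3 * ((N:ℝ) * Real.log N) := by
    have h3' : b ≤ η/3 * N := by
      rw [div_le_iff₀ hη] at h3
      have := le_abs_self b; linarith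
    calc b * Real.log N ≤ (η/3*N) * Real.log N :=
          mul_le_mul_of_nonneg_right h3' (by linarith)
      _ = η/3 * ((N:ℝ)*Real.log N) := by ring
  have hc : c ≤ η/3 * ((N:ℝ) * Real.log N) := by
    have h4' : c ≤ η/3 * N := by
      rw [div_le_iff₀ hη] at h4
      have := le_abs_self c; linarith
    have h5 : η/3 * N * 1 ≤ η/3 * N * Real.log N := by
      apply mul_le_mul_of_nonneg_left h1; positivity
    nlinarith
  linarith

set_option maxHeartbeats 1000000 in
/-- Complexity of full-history SCaSML, analytic core: for every
`η > 0`, eventually `(5·M_N)^N · E(N)^{2+δ} ≤ exp(N·log N·(−βδ+η))`; in particular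
`(5·M_N)^N · E(N)^{2+δ} → 0`. -/
theorem fullhist_complexity_asymptotics (β C p δ : ℝ)
    (hβ : 0 < β) (hC : 1 ≤ C) (hp : 0 < p) (hδ : 0 < δ) :
    (∀ η > (0:ℝ), ∃ N₀ : ℕ, ∀ N : ℕ, N₀ ≤ N → 2 ≤ N →
      (5 * ((fullhistSampleBase β N : ℕ) : ℝ)) ^ N * fullhistFactor β C p N ^ (2 + δ)
        ≤ Real.exp ((N:ℝ) * Real.log (N:ℝ) * (-(β * δ) + η))) ∧
    Filter.Tendsto
      (fun N : ℕ =>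
        (5 * ((fullhistSampleBase β N : ℕ) : ℝ)) ^ N * fullhistFactor β C p N ^ (2 + δ))
      Filter.atTop (nhds 0) := by
  have h2β : (0:ℝ) < 2*β := by linarith
  have hCexp : (0:ℝ) < 2*C := by linarith
  have key : ∀ η > (0:ℝ), ∀ᶠ N : ℕ in atTop,
      (5 * ((fullhistSampleBase β N : ℕ) : ℝ)) ^ N * fullhistFactor β C p N ^ (2 + δ)
        ≤ Real.exp ((N:ℝ) * Real.log (N:ℝ) * (-(β * δ) + η)) := by
    intro η hη
    have hNt : Tendsto (fun N : ℕ => (N:ℝ)) atTop atTop := tendsto_natCast_atTop_atTop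
    filter_upwards [eventually_ge_atTop 2,
      hNt.eventually_ge_atTop ((2:ℝ) ^ (1/(2*β))),
      aux_linear_le (Real.log 5 + (2+δ)*(Real.log (2*C) + β + Real.log 2/2))
        ((2+δ)*(1/8 + β)) ((2+δ)*(Real.log (Real.exp 1 * (p/2+1))/8)) η hη]
      with N hN2 hNc hlow
    have hNR : (2:ℝ) ≤ (N:ℝ) := by exact_mod_cast hN2
    have hN0 : (0:ℝ) < (N:ℝ) := by linarith
    set m : ℝ := ((fullhistSampleBase β N : ℕ) : ℝ) with hm
    have hmle : m ≤ (N:ℝ)^(2*β) := by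
      rw [hm]; exact Nat.floor_le (Real.rpow_nonneg hN0.le _)
    have hpow2 : (2:ℝ) ≤ (N:ℝ)^(2*β) := by
      have h1 : ((2:ℝ) ^ (1/(2*β))) ^ (2*β) ≤ (N:ℝ)^(2*β) :=
        Real.rpow_le_rpow (Real.rpow_nonneg (by norm_num) _) hNc h2β.le
      rwa [← Real.rpow_mul (by norm_num : (0:ℝ) ≤ 2), one_div_mul_cancel h2β.ne',
        Real.rpow_one] at h1
    have hmgt : (N:ℝ)^(2*β) - 1 < m := by
      rw [hm]; exact_mod_cast Nat.sub_one_lt_floor _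
    have hm1 : (1:ℝ) ≤ m := by linarith
    have hmpos : (0:ℝ) < m := by linarith
    have hroot : m ^ (1/(2*β)) ≤ (N:ℝ) := by
      have h1 : m ^ (1/(2*β)) ≤ ((N:ℝ)^(2*β)) ^ (1/(2*β)) :=
        Real.rpow_le_rpow hmpos.le hmle (by positivity)
      rwa [← Real.rpow_mul hN0.le, mul_one_div_cancel h2β.ne', Real.rpow_one] at h1
    have hlogm : 2*β*Real.log N - Real.log 2 ≤ Real.log m := by
      have h1 : (N:ℝ)^(2*β)/2 ≤ m := by linarith
      have h2 : Real.log ((N:ℝ)^(2*β)/2) ≤ Real.log m := Real.log_le_log (by positivity) h1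
      rwa [Real.log_div (by positivity) two_ne_zero, Real.log_rpow hN0] at h2
    have hn1 : ((N-1:ℕ):ℝ) = (N:ℝ) - 1 := by
      rw [Nat.cast_sub (by omega : 1 ≤ N), Nat.cast_one]
    have hbase : (0:ℝ) < Real.exp 1 * (p*(N:ℝ)/2+1) := by positivity
    have e1 : (Real.exp 1 * (p*(N:ℝ)/2+1)) ^ ((1:ℝ)/8)
        = Real.exp (Real.log (Real.exp 1 * (p*(N:ℝ)/2+1)) * (1/8)) :=
      Real.rpow_def_of_pos hbase _
    have e2 : (2*C) ^ (N-1) = Real.exp (((N-1:ℕ):ℝ) * Real.log (2*C)) := by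
      rw [Real.exp_nat_mul, Real.exp_log hCexp]
    have e3 : Real.sqrt (m ^ (N-1)) = Real.exp (((N-1:ℕ):ℝ) * Real.log m * (1/2)) := by
      rw [show m ^ (N-1) = Real.exp (((N-1:ℕ):ℝ) * Real.log m) by
            rw [Real.exp_nat_mul, Real.exp_log hmpos],
        Real.sqrt_eq_rpow, Real.rpow_def_of_pos (Real.exp_pos _), Real.log_exp]
    have hE : fullhistFactor β C p N =
        Real.exp (Real.log (Real.exp 1 * (p*(N:ℝ)/2+1)) * (1/8)
          + ((N-1:ℕ):ℝ) * Real.log (2*C) + β * m ^ (1/(2*β))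
          - ((N-1:ℕ):ℝ) * Real.log m * (1/2)) := by
      rw [fullhistFactor, ← hm, e1, e2, e3, ← Real.exp_add, ← Real.exp_add, ← Real.exp_sub]
    have e4 : ∀ X : ℝ, Real.exp X ^ ((2:ℝ)+δ) = Real.exp (X * (2+δ)) := fun X => by
      rw [Real.rpow_def_of_pos (Real.exp_pos _), Real.log_exp]
    have h5m : (5*m) ^ N ≤ Real.exp ((N:ℝ) * (Real.log 5 + 2*β*Real.log N)) := by
      have hb : 5*m ≤ Real.exp (Real.log 5 + 2*β*Real.log N) := by
        rw [Real.exp_add, Real.exp_log (by norm_num : (0:ℝ) < 5)]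
        have hx : Real.exp (2*β*Real.log N) = (N:ℝ)^(2*β) := by
          rw [Real.rpow_def_of_pos hN0, mul_comm]
        rw [hx]; nlinarith
      calc (5*m)^N ≤ (Real.exp (Real.log 5 + 2*β*Real.log N))^N :=
            pow_le_pow_left₀ (by positivity) hb N
        _ = Real.exp ((N:ℝ) * (Real.log 5 + 2*β*Real.log N)) := by
            rw [← Real.exp_nat_mul]
    calc (5*m)^N * fullhistFactor β C p N ^ ((2:ℝ)+δ)
        ≤ Real.exp ((N:ℝ)*(Real.log 5 + 2*β*Real.log N)) *
            Real.exp ((Real.log (Real.exp 1 * (p*(N:ℝ)/2+1)) * (1/8)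
              + ((N-1:ℕ):ℝ) * Real.log (2*C) + β*m^(1/(2*β))
              - ((N-1:ℕ):ℝ)*Real.log m*(1/2)) * (2+δ)) := by
          rw [hE, e4]
          exact mul_le_mul_of_nonneg_right h5m (Real.exp_pos _).le
      _ = Real.exp ((N:ℝ)*(Real.log 5 + 2*β*Real.log N)
              + (Real.log (Real.exp 1 * (p*(N:ℝ)/2+1)) * (1/8)
              + ((N-1:ℕ):ℝ) * Real.log (2*C) + β*m^(1/(2*β))
              - ((N-1:ℕ):ℝ)*Real.log m*(1/2)) * (2+δ)) := (Real.exp_add _ _).symm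
      _ ≤ Real.exp ((N:ℝ) * Real.log (N:ℝ) * (-(β * δ) + η)) := by
          rw [Real.exp_le_exp]
          have hta : Real.log (Real.exp 1 * (p*(N:ℝ)/2+1))
              ≤ Real.log (Real.exp 1 * (p/2+1)) + Real.log N := by
            have h1 : p*(N:ℝ)/2+1 ≤ (p/2+1)*(N:ℝ) := by nlinarith
            have h2 : Real.exp 1 * (p*(N:ℝ)/2+1) ≤ (Real.exp 1 * (p/2+1)) * (N:ℝ) := by
              nlinarith [Real.exp_pos 1]
            have h3 := Real.log_le_log hbase h2
            rwa [Real.log_mul (by positivity) hN0.ne'] at h3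
          have hlc : (0:ℝ) ≤ Real.log (2*C) := Real.log_nonneg (by linarith)
          have hl2 : (0:ℝ) ≤ Real.log 2 := Real.log_nonneg one_le_two
          have hn1le : ((N-1:ℕ):ℝ) ≤ (N:ℝ) := by rw [hn1]; linarith
          have hn1nn : (0:ℝ) ≤ ((N-1:ℕ):ℝ) := by rw [hn1]; linarith
          have htb : ((N-1:ℕ):ℝ) * Real.log (2*C) ≤ (N:ℝ) * Real.log (2*C) :=
            mul_le_mul_of_nonneg_right hn1le hlc
          have hts : β * m^(1/(2*β)) ≤ β * (N:ℝ) :=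
            mul_le_mul_of_nonneg_left hroot hβ.le
          have htd : ((N-1:ℕ):ℝ) * (2*β*Real.log N - Real.log 2) * (1/2)
              ≤ ((N-1:ℕ):ℝ) * Real.log m * (1/2) := by
            apply mul_le_mul_of_nonneg_right _ (by norm_num)
            exact mul_le_mul_of_nonneg_left hlogm hn1nn
          have hslack : (0:ℝ) ≤ (2+δ) * (Real.log 2 / 2) := by
            apply mul_nonneg (by linarith) (by linarith)
          have hT : (Real.log (Real.exp 1 * (p*(N:ℝ)/2+1)) * (1/8)
              + ((N-1:ℕ):ℝ) * Real.log (2*C) + β*m^(1/(2*β))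
              - ((N-1:ℕ):ℝ)*Real.log m*(1/2))
              ≤ ((Real.log (Real.exp 1 * (p/2+1)) + Real.log N) * (1/8)
              + (N:ℝ)*Real.log (2*C) + β*(N:ℝ)
              - ((N:ℝ)-1) * (2*β*Real.log N - Real.log 2) * (1/2)) := by
            rw [← hn1]
            linarith [hta, htb, hts, htd]
          have hT2 : (Real.log (Real.exp 1 * (p*(N:ℝ)/2+1)) * (1/8)
              + ((N-1:ℕ):ℝ) * Real.log (2*C) + β*m^(1/(2*β))
              - ((N-1:ℕ):ℝ)*Real.log m*(1/2)) * (2+δ)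
              ≤ ((Real.log (Real.exp 1 * (p/2+1)) + Real.log N) * (1/8)
              + (N:ℝ)*Real.log (2*C) + β*(N:ℝ)
              - ((N:ℝ)-1) * (2*β*Real.log N - Real.log 2) * (1/2)) * (2+δ) :=
            mul_le_mul_of_nonneg_right hT (by linarith)
          nlinarith [hT2, hlow, hslack]
  refine ⟨?_, ?_⟩
  · intro η hη
    obtain ⟨N₀, h⟩ := Filter.eventually_atTop.mp (key η hη)
    exact ⟨N₀, fun N hN _ => h N hN⟩
  · have hkey := key (β*δ/2) (by positivity)
    have hzero : Tendsto (fun N : ℕ =>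
        Real.exp ((N:ℝ)*Real.log (N:ℝ)*(-(β*δ)+β*δ/2))) atTop (nhds 0) := by
      apply Real.tendsto_exp_atBot.comp
      have hNL : Tendsto (fun N : ℕ => (N:ℝ)*Real.log N) atTop atTop :=
        tendsto_natCast_atTop_atTop.atTop_mul_atTop₀
          (Real.tendsto_log_atTop.comp tendsto_natCast_atTop_atTop)
      have hc : (-(β*δ)+β*δ/2) < 0 := by nlinarith
      exact hNL.atTop_mul_const_of_neg hc
    apply squeeze_zero' (Filter.Eventually.of_forall fun N => ?_) hkey hzero
    apply mul_nonneg (by positivity)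
    apply Real.rpow_nonneg
    rw [fullhistFactor]
    have hp' : (0:ℝ) ≤ p := hp.le
    positivity
end
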